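/- arXiv:1706.07719 — 4 statements merged into one kernel-verified Lean document; each statement's English description precedes it below -/
import Mathlib

section
/- Let I be a finite index set and for each i ∈ I let P_i and Q_i be probability mass functions on a finite set α_i. Then the squared Hellinger divergence between the product pmfs satisfies H²(⊗_{i∈I} P_i ‖ ⊗_{i∈I} Q_i) = 1 − ∏_{i∈I} (1 − H²(P_i‖Q_i)). -/
/-- `p` is a probability mass function on the finite type `α`. -/
def IsPmf {α : Type*} [Fintype α] (p : α → ℝ) : Prop :=
  (∀ a, 0 ≤ p a) ∧ ∑ a, p a = 1

/-- Squared Hellinger divergence between pmfs on a finite type. -/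
noncomputable def hellingerSq {α : Type*} [Fintype α] (p q : α → ℝ) : ℝ :=
  (1 / 2) * ∑ a, (Real.sqrt (p a) - Real.sqrt (q a)) ^ 2

lemma sqrt_prod' {ι : Type*} (s : Finset ι) (f : ι → ℝ) (hf : ∀ i ∈ s, 0 ≤ f i) :
    Real.sqrt (∏ i ∈ s, f i) = ∏ i ∈ s, Real.sqrt (f i) := by
  induction s using Finset.cons_induction with
  | empty => simp
  | cons a s ha ih =>
    rw [Finset.prod_cons, Finset.prod_cons,
      Real.sqrt_mul (hf a (Finset.mem_cons_self a s)),
      ih (fun i hi => hf i (Finset.mem_cons_of_mem hi))]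

lemma hellingerSq_eq {α : Type*} [Fintype α] {p q : α → ℝ}
    (hp : IsPmf p) (hq : IsPmf q) :
    hellingerSq p q = 1 - ∑ a, Real.sqrt (p a) * Real.sqrt (q a) := by
  have : ∀ a, (Real.sqrt (p a) - Real.sqrt (q a)) ^ 2
      = p a + q a - 2 * (Real.sqrt (p a) * Real.sqrt (q a)) := by
    intro a
    have h1 : Real.sqrt (p a) ^ 2 = p a := Real.sq_sqrt (hp.1 a)
    have h2 : Real.sqrt (q a) ^ 2 = q a := Real.sq_sqrt (hq.1 a)
    ring_nf
    nlinarith [h1, h2]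
  simp only [hellingerSq, this]
  rw [Finset.sum_sub_distrib, Finset.sum_add_distrib, hp.2, hq.2,
    ← Finset.mul_sum]
  ring

/-- Squared Hellinger divergence between product pmfs equals
`1 − ∏ᵢ (1 − H²(Pᵢ‖Qᵢ))`. -/
theorem hellingerSq_prod_eq {I : Type*} [Fintype I] [DecidableEq I]
    {α : I → Type*} [∀ i, Fintype (α i)]
    (P Q : ∀ i, α i → ℝ) (hP : ∀ i, IsPmf (P i)) (hQ : ∀ i, IsPmf (Q i)) :
    hellingerSq (fun x : ∀ i, α i => ∏ i, P i (x i))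
        (fun x : ∀ i, α i => ∏ i, Q i (x i)) =
      1 - ∏ i, (1 - hellingerSq (P i) (Q i)) := by
  have hPprod : IsPmf (fun x : ∀ i, α i => ∏ i, P i (x i)) := by
    constructor
    · exact fun x => Finset.prod_nonneg fun i _ => (hP i).1 (x i)
    · rw [← Fintype.piFinset_univ, ← Finset.prod_univ_sum]
      simp [(fun i => (hP i).2)]
  have hQprod : IsPmf (fun x : ∀ i, α i => ∏ i, Q i (x i)) := by
    constructor
    · exact fun x => Finset.prod_nonneg fun i _ => (hQ i).1 (x i)
    · rw [← Fintype.piFinset_univ, ← Finset.prod_univ_sum]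
      simp [(fun i => (hQ i).2)]
  rw [hellingerSq_eq hPprod hQprod]
  have key : ∑ x : ∀ i, α i, Real.sqrt (∏ i, P i (x i)) * Real.sqrt (∏ i, Q i (x i))
      = ∏ i, ∑ a, Real.sqrt (P i a) * Real.sqrt (Q i a) := by
    rw [Finset.prod_univ_sum, ← Fintype.piFinset_univ]
    apply Finset.sum_congr rfl
    intro x _
    rw [sqrt_prod' _ _ (fun i _ => (hP i).1 (x i)),
        sqrt_prod' _ _ (fun i _ => (hQ i).1 (x i)), ← Finset.prod_mul_distrib]
  rw [key]
  congr 1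
  apply Finset.prod_congr rfl
  intro i _
  rw [hellingerSq_eq (hP i) (hQ i)]
  ring
end

section
/- (Sanov's theorem, finite alphabet.) Let α be a finite set, let P be a pmf on α, let M ≥ 1 be a natural number, and let E be any set of pmfs on α. If X₁,…,X_M are i.i.d. with common pmf P, then the probability that the empirical distribution p̂ of (X₁,…,X_M) lies in E is at most (M+1)^{|α|} · exp(−M · inf_{p ∈ E} D(p‖P)). -/
open Finset

/-- Kullback–Leibler divergence between pmfs on a finite type, valued in `EReal`:
it is `+∞` unless `p` is absolutely continuous with respect to `q`, in which case it is
`∑ a, p a * log (p a / q a)` (with `0 * log (0/x) = 0`). -/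
noncomputable def klDiv {α : Type*} [Fintype α] (p q : α → ℝ) : EReal :=
  if ∀ a, q a = 0 → p a = 0 then ((∑ a, p a * Real.log (p a / q a) : ℝ) : EReal) else ⊤

/-- Empirical distribution of the sample `x = (x₁, …, x_M)`. -/
noncomputable def empDist {α : Type*} [Fintype α] [DecidableEq α] {M : ℕ}
    (x : Fin M → α) (a : α) : ℝ :=
  ((Finset.univ.filter fun i => x i = a).card : ℝ) / M

/-!
Method of types. A sample `x` with empirical distribution `p` has probability
`P^M(x) = exp (-M D(p‖P)) · p^M(x)` (and `0` if `p` is not absolutely continuous with respect to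
`P`), and `D(p‖P)` is at least the infimum over `E` whenever `p ∈ E`. Samples with the same letter
counts share `p`, so their total `p^M`-mass is at most `1`; there are at most `(M+1)^{|α|}` such
count vectors.
-/

section EmpiricalDistribution

variable {α : Type*} [Fintype α] {M : ℕ}

lemma sum_prod_eq_one_of_isPmf {p : α → ℝ} (hp : IsPmf p) :
    ∑ x : Fin M → α, ∏ i, p (x i) = 1 := by
  rw [← Fintype.sum_pow, hp.2, one_pow]

lemma sum_mul_log_div_nonneg {p q : α → ℝ} (hp : IsPmf p) (hq : IsPmf q)
    (hpq : ∀ a, q a = 0 → p a = 0) : 0 ≤ ∑ a, p a * Real.log (p a / q a) := by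
  have hterm : ∀ a, p a - q a ≤ p a * Real.log (p a / q a) := by
    intro a
    obtain hpa | hpa := (hp.1 a).eq_or_lt
    · simp [← hpa, hq.1 a]
    have hqa : 0 < q a := (hq.1 a).lt_of_ne fun h => hpa.ne' (hpq a h.symm)
    have hlog := Real.one_sub_inv_le_log_of_pos (div_pos hpa hqa)
    rw [inv_div] at hlog
    calc p a - q a = p a * (1 - q a / p a) := by field_simp
      _ ≤ p a * Real.log (p a / q a) := mul_le_mul_of_nonneg_left hlog hpa.le
  calc (0 : ℝ) = ∑ a, (p a - q a) := by rw [sum_sub_distrib, hp.2, hq.2, sub_self]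
    _ ≤ _ := sum_le_sum fun a _ => hterm a

variable [DecidableEq α]

lemma sum_comp_eq_mul_sum_empDist (hM : 0 < M) (g : α → ℝ) (x : Fin M → α) :
    ∑ i, g (x i) = M * ∑ a, empDist x a * g a := by
  rw [← sum_fiberwise' univ x g, mul_sum]
  refine sum_congr rfl fun a _ => ?_
  rw [sum_const, nsmul_eq_mul, empDist]
  field_simp

lemma empDist_isPmf (hM : 0 < M) (x : Fin M → α) : IsPmf (empDist x) := by
  refine ⟨fun a => by unfold empDist; positivity, ?_⟩
  have h := sum_comp_eq_mul_sum_empDist hM 1 x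
  simp only [Pi.one_apply, sum_const, card_univ, Fintype.card_fin, nsmul_eq_mul, mul_one] at h
  have hM' : (M : ℝ) ≠ 0 := by positivity
  exact (mul_eq_left₀ hM').mp h.symm

def letterCount (x : Fin M → α) (a : α) : Fin (M + 1) :=
  ⟨#{i | x i = a}, Nat.lt_succ_of_le ((card_filter_le _ _).trans_eq (card_fin M))⟩

lemma empDist_eq_of_letterCount_eq {x y : Fin M → α} (h : letterCount x = letterCount y) :
    empDist x = empDist y := by
  funext a
  have hcount : #{i | x i = a} = #{i | y i = a} := congrArg (fun c => (c a : ℕ)) h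
  simp only [empDist, hcount]

lemma sum_prod_empDist_filter_le_one (hM : 0 < M) (c : α → Fin (M + 1)) :
    ∑ x with letterCount x = c, ∏ i, empDist x (x i) ≤ 1 := by
  obtain h | ⟨x₀, hx₀⟩ := (univ.filter fun x : Fin M → α => letterCount x = c).eq_empty_or_nonempty
  · simp [h]
  have hp := empDist_isPmf hM x₀
  calc ∑ x with letterCount x = c, ∏ i, empDist x (x i)
      = ∑ x with letterCount x = c, ∏ i, empDist x₀ (x i) := by
        refine sum_congr rfl fun x hx => ?_
        rw [empDist_eq_of_letterCount_eq ((mem_filter.1 hx).2.trans (mem_filter.1 hx₀).2.symm)]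
    _ ≤ ∑ x : Fin M → α, ∏ i, empDist x₀ (x i) :=
        sum_le_sum_of_subset_of_nonneg (subset_univ _) fun x _ _ => prod_nonneg fun i _ => hp.1 _
    _ = 1 := sum_prod_eq_one_of_isPmf hp

lemma sum_prod_empDist_le (hM : 0 < M) :
    ∑ x : Fin M → α, ∏ i, empDist x (x i) ≤ ((M : ℝ) + 1) ^ Fintype.card α := by
  rw [← sum_fiberwise univ letterCount]
  calc _ ≤ ∑ _c : α → Fin (M + 1), (1 : ℝ) :=
        sum_le_sum fun c _ => sum_prod_empDist_filter_le_one hM c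
    _ = ((M : ℝ) + 1) ^ Fintype.card α := by simp

lemma prod_eq_exp_mul_prod_empDist (hM : 0 < M) {P : α → ℝ} (hP : ∀ a, 0 ≤ P a)
    (x : Fin M → α) (hac : ∀ a, P a = 0 → empDist x a = 0) :
    ∏ i, P (x i) = Real.exp (-M * ∑ a, empDist x a * Real.log (empDist x a / P a)) *
      ∏ i, empDist x (x i) := by
  have hpos : ∀ i, 0 < empDist x (x i) := fun i => by
    unfold empDist
    exact div_pos (Nat.cast_pos.2 (card_pos.2 ⟨i, by simp⟩)) (Nat.cast_pos.2 hM)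
  have hPpos : ∀ i, 0 < P (x i) := fun i =>
    (hP _).lt_of_ne fun h => (hpos i).ne' (hac _ h.symm)
  rw [neg_mul, ← sum_comp_eq_mul_sum_empDist hM (fun a => Real.log (empDist x a / P a)),
    ← sum_neg_distrib, Real.exp_sum, ← prod_mul_distrib]
  refine prod_congr rfl fun i _ => ?_
  rw [Real.exp_neg, Real.exp_log (div_pos (hpos i) (hPpos i)), inv_div,
    div_mul_cancel₀ _ (hpos i).ne']

lemma prod_le_exp_mul_prod_empDist (hM : 0 < M) {P : α → ℝ} (hP : IsPmf P) (x : Fin M → α)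
    {e : EReal} (he : e ≤ klDiv (empDist x) P) :
    ∏ i, P (x i) ≤ (if e = ⊤ then 0 else Real.exp (-M * e.toReal)) * ∏ i, empDist x (x i) := by
  have hp := empDist_isPmf hM x
  unfold klDiv at he
  split_ifs at he with hac
  · set D := ∑ a, empDist x a * Real.log (empDist x a / P a)
    have he_top : e ≠ ⊤ := ne_top_of_le_ne_top (EReal.coe_ne_top D) he
    have he_le : e.toReal ≤ D := by
      -- `EReal.toReal ⊥ = 0`, so this case needs Gibbs' inequality `0 ≤ D`.
      obtain rfl | he_bot := eq_or_ne e ⊥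
      · simpa using sum_mul_log_div_nonneg hp hP hac
      · simpa using EReal.toReal_le_toReal he he_bot (EReal.coe_ne_top D)
    rw [if_neg he_top, prod_eq_exp_mul_prod_empDist hM hP.1 x hac]
    refine mul_le_mul_of_nonneg_right (Real.exp_le_exp.2 ?_) (prod_nonneg fun i _ => hp.1 _)
    exact mul_le_mul_of_nonpos_left he_le (by simp)
  · obtain ⟨a, hPa, hpa⟩ := not_forall₂.mp hac
    obtain ⟨i, -, rfl⟩ : ∃ i ∈ univ, x i = a := by
      by_contra! h
      exact hpa (by simp [empDist, filter_false_of_mem h])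
    rw [prod_eq_zero (mem_univ i) hPa]
    refine mul_nonneg ?_ (prod_nonneg fun j _ => hp.1 _)
    split_ifs <;> positivity

end EmpiricalDistribution

theorem sanov_general {α : Type*} [Fintype α] [DecidableEq α]
    (P : α → ℝ) (hP : IsPmf P) (M : ℕ) (hM : 1 ≤ M)
    (E : Set (α → ℝ)) :
    (∑ x : Fin M → α,
        Set.indicator {x : Fin M → α | empDist x ∈ E} (fun x => ∏ i, P (x i)) x) ≤
      ((M : ℝ) + 1) ^ (Fintype.card α) *
        (if (⨅ p ∈ E, klDiv p P) = ⊤ then 0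
         else Real.exp (-(M : ℝ) * (⨅ p ∈ E, klDiv p P).toReal)) := by
  set B : ℝ := if (⨅ p ∈ E, klDiv p P) = ⊤ then 0
    else Real.exp (-(M : ℝ) * (⨅ p ∈ E, klDiv p P).toReal)
  have hB : 0 ≤ B := by positivity
  have hterm : ∀ x : Fin M → α, Set.indicator {x : Fin M → α | empDist x ∈ E}
      (fun x => ∏ i, P (x i)) x ≤ B * ∏ i, empDist x (x i) := by
    intro x
    by_cases hx : empDist x ∈ E
    · rw [Set.indicator_of_mem (s := {x | empDist x ∈ E}) hx]
      exact prod_le_exp_mul_prod_empDist hM hP x (biInf_le _ hx)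
    · rw [Set.indicator_of_notMem (s := {x | empDist x ∈ E}) hx]
      exact mul_nonneg hB (prod_nonneg fun i _ => (empDist_isPmf hM x).1 _)
  calc _ ≤ ∑ x : Fin M → α, B * ∏ i, empDist x (x i) := sum_le_sum fun x _ => hterm x
    _ = B * ∑ x : Fin M → α, ∏ i, empDist x (x i) := (mul_sum _ _ _).symm
    _ ≤ B * ((M : ℝ) + 1) ^ Fintype.card α := by gcongr; exact sum_prod_empDist_le hM
    _ = _ := mul_comm _ _

/-- Sanov's theorem on a finite alphabet: if `X₁, …, X_M` are i.i.d. with pmf `P`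
(so the sample is drawn from the product pmf on `α^M`), then for any set `E` of pmfs
on `α`, the probability that the empirical distribution lies in `E` is at most
`(M+1)^{|α|} · exp(−M·inf_{p ∈ E} D(p‖P))` (the bound being `0` when the infimum is `+∞`). -/
theorem sanov {α : Type*} [Fintype α] [DecidableEq α]
    (P : α → ℝ) (hP : IsPmf P) (M : ℕ) (hM : 1 ≤ M)
    (E : Set (α → ℝ)) (hE : ∀ p ∈ E, IsPmf p) :
    (∑ x : Fin M → α,
        Set.indicator {x : Fin M → α | empDist x ∈ E} (fun x => ∏ i, P (x i)) x) ≤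
      ((M : ℝ) + 1) ^ (Fintype.card α) *
        (if (⨅ p ∈ E, klDiv p P) = ⊤ then 0
         else Real.exp (-(M : ℝ) * (⨅ p ∈ E, klDiv p P).toReal)) :=
  sanov_general P hP M hM E
end

section
/- For any pmfs p and q on a finite set α, the Kullback–Leibler divergence dominates twice the squared Hellinger divergence: D(p‖q) ≥ 2·H²(p‖q). -/
/-- KL divergence dominates twice the squared Hellinger divergence. -/
theorem klDiv_ge_two_hellingerSq {α : Type*} [Fintype α]
    (p q : α → ℝ) (hp : IsPmf p) (hq : IsPmf q) :
    ((2 * hellingerSq p q : ℝ) : EReal) ≤ klDiv p q := by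
  unfold klDiv
  split_ifs with h
  · rw [EReal.coe_le_coe_iff]
    have key : ∀ a, 2 * p a - 2 * Real.sqrt (p a * q a) ≤ p a * Real.log (p a / q a) := by
      intro a
      by_cases hp0 : p a = 0
      · simp [hp0]
      · have hppos : 0 < p a := lt_of_le_of_ne (hp.1 a) (Ne.symm hp0)
        have hqpos : 0 < q a := by
          rcases lt_or_eq_of_le (hq.1 a) with h' | h'
          · exact h'
          · exact absurd (h a h'.symm) hp0
        set s := Real.sqrt (p a) with hs
        set t := Real.sqrt (q a) with ht
        have hspos : 0 < s := Real.sqrt_pos.mpr hppos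
        have htpos : 0 < t := Real.sqrt_pos.mpr hqpos
        have hs2 : s ^ 2 = p a := Real.sq_sqrt hppos.le
        have ht2 : t ^ 2 = q a := Real.sq_sqrt hqpos.le
        have hst : Real.sqrt (p a * q a) = s * t := Real.sqrt_mul (hp.1 a) (q a)
        have hlog : Real.log (p a / q a) = 2 * Real.log (s / t) := by
          rw [← hs2, ← ht2, ← div_pow, Real.log_pow]
          push_cast; ring
        have hlb : 1 - t / s ≤ Real.log (s / t) := by
          have := Real.log_le_sub_one_of_pos (div_pos htpos hspos)
          have hinv : Real.log (t / s) = - Real.log (s / t) := by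
            rw [← Real.log_inv, inv_div]
          nlinarith
        rw [hlog, hst]
        have : p a * (1 - t / s) = s ^ 2 - s * t := by
          rw [← hs2]; field_simp
        nlinarith [mul_le_mul_of_nonneg_left hlb hppos.le]
    calc 2 * hellingerSq p q = ∑ a, (2 * p a - 2 * Real.sqrt (p a * q a))
          + (∑ a, q a - ∑ a, p a) := by
          unfold hellingerSq
          rw [Finset.sum_sub_distrib]
          rw [← Finset.mul_sum]
          have : ∀ a ∈ Finset.univ, (Real.sqrt (p a) - Real.sqrt (q a)) ^ 2
              = p a + q a - 2 * Real.sqrt (p a * q a) := by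
            intro a _
            rw [Real.sqrt_mul (hp.1 a)]
            have h1 := Real.sq_sqrt (hp.1 a)
            have h2 := Real.sq_sqrt (hq.1 a)
            nlinarith
          rw [Finset.sum_congr rfl this]
          rw [Finset.sum_sub_distrib, Finset.sum_add_distrib, ← Finset.mul_sum]
          ring
      _ = ∑ a, (2 * p a - 2 * Real.sqrt (p a * q a)) := by
          rw [hp.2, hq.2]; ring
      _ ≤ _ := Finset.sum_le_sum fun a _ => key a
  · exact le_top
end

section
/- Let p, f₊, f₋ be pmfs on a finite set α. If H(p‖f₊) ≤ (1/2)·H(f₊‖f₋), then D(p‖f₋) ≥ (1/2)·H²(f₊‖f₋). -/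
/-- Hellinger distance between pmfs on a finite type. -/
noncomputable def hellinger {α : Type*} [Fintype α] (p q : α → ℝ) : ℝ :=
  Real.sqrt (hellingerSq p q)

/-!
The square-root map `p ↦ (√(p a))ₐ` sends Hellinger distance to `1/√2` times Euclidean distance,
so `H` satisfies the triangle inequality and the hypothesis forces `H(p‖f₋) ≥ H(f₊‖f₋)/2`.
On the other hand `D(p‖q) ≥ 2 H²(p‖q)` for distributions of equal mass, termwise from
`log x ≥ 1 - 1/x` applied at `x = √(p a / q a)`.
-/

open Real Finset

lemma sq_sqrt_sub_sqrt_add_sub_le_mul_log {a b : ℝ} (ha : 0 ≤ a) (hb : 0 ≤ b)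
    (hab : b = 0 → a = 0) : (√a - √b) ^ 2 + (a - b) ≤ a * log (a / b) := by
  rcases ha.eq_or_lt with rfl | ha
  · simp [sq_sqrt hb]
  have hb : 0 < b := hb.lt_of_ne fun h => ha.ne' (hab h.symm)
  have hsa : 0 < √a := sqrt_pos.2 ha
  have hsb : 0 < √b := sqrt_pos.2 hb
  have hlog : 1 - √b / √a ≤ log (a / b) / 2 := by
    rw [← log_sqrt (div_pos ha hb).le, sqrt_div ha.le, ← inv_div]
    exact one_sub_inv_le_log_of_pos (div_pos hsa hsb)
  calc (√a - √b) ^ 2 + (a - b) = 2 * a * (1 - √b / √a) := by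
        field_simp
        nlinarith [sq_sqrt ha.le, sq_sqrt hb.le]
    _ ≤ a * log (a / b) := by nlinarith

section

variable {α : Type*} [Fintype α]

noncomputable def sqrtVec (p : α → ℝ) : EuclideanSpace ℝ α :=
  WithLp.toLp 2 fun a => √(p a)

lemma hellingerSq_eq_dist_sqrtVec_sq (p q : α → ℝ) :
    hellingerSq p q = dist (sqrtVec p) (sqrtVec q) ^ 2 / 2 := by
  rw [EuclideanSpace.dist_eq, sq_sqrt (sum_nonneg fun _ _ => sq_nonneg _), hellingerSq]
  simp only [sqrtVec, Real.dist_eq, sq_abs]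
  ring

lemma hellinger_eq_dist_sqrtVec (p q : α → ℝ) :
    hellinger p q = dist (sqrtVec p) (sqrtVec q) / √2 := by
  rw [hellinger, hellingerSq_eq_dist_sqrtVec_sq, sqrt_div' _ zero_le_two, sqrt_sq dist_nonneg]

lemma hellinger_comm (p q : α → ℝ) : hellinger p q = hellinger q p := by
  simp only [hellinger_eq_dist_sqrtVec, dist_comm]

lemma hellinger_triangle (p q r : α → ℝ) :
    hellinger p r ≤ hellinger p q + hellinger q r := by
  simp only [hellinger_eq_dist_sqrtVec, ← add_div]
  gcongr
  exact dist_triangle _ _ _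

lemma hellingerSq_nonneg (p q : α → ℝ) : 0 ≤ hellingerSq p q := by
  rw [hellingerSq_eq_dist_sqrtVec_sq]
  positivity

lemma hellinger_nonneg (p q : α → ℝ) : 0 ≤ hellinger p q :=
  sqrt_nonneg _

lemma sq_hellinger (p q : α → ℝ) : hellinger p q ^ 2 = hellingerSq p q := by
  rw [hellinger, sq_sqrt (hellingerSq_nonneg p q)]

lemma sum_sq_sqrt_sub_sqrt_le_sum_mul_log {p q : α → ℝ}
    (hp : ∀ a, 0 ≤ p a) (hq : ∀ a, 0 ≤ q a) (hpq : ∀ a, q a = 0 → p a = 0)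
    (hsum : ∑ a, p a = ∑ a, q a) :
    ∑ a, (√(p a) - √(q a)) ^ 2 ≤ ∑ a, p a * log (p a / q a) := by
  calc ∑ a, (√(p a) - √(q a)) ^ 2
      = ∑ a, ((√(p a) - √(q a)) ^ 2 + (p a - q a)) := by
        rw [sum_add_distrib, sum_sub_distrib, hsum, sub_self, add_zero]
    _ ≤ ∑ a, p a * log (p a / q a) :=
        sum_le_sum fun a _ => sq_sqrt_sub_sqrt_add_sub_le_mul_log (hp a) (hq a) (hpq a)

lemma two_mul_hellingerSq_le_klDiv {p q : α → ℝ}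
    (hp : ∀ a, 0 ≤ p a) (hq : ∀ a, 0 ≤ q a) (hsum : ∑ a, p a = ∑ a, q a) :
    ((2 * hellingerSq p q : ℝ) : EReal) ≤ klDiv p q := by
  unfold klDiv
  split_ifs with hpq
  · rw [EReal.coe_le_coe_iff, hellingerSq, ← mul_assoc, mul_one_div_cancel two_ne_zero, one_mul]
    exact sum_sq_sqrt_sub_sqrt_le_sum_mul_log hp hq hpq hsum
  · exact le_top

end

theorem klDiv_ge_of_hellinger_close_general {α : Type*} [Fintype α]
    (p fP fM : α → ℝ) (hp : IsPmf p) (hfM : IsPmf fM)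
    (hclose : hellinger p fP ≤ (1 / 2) * hellinger fP fM) :
    (((1 / 2) * hellingerSq fP fM : ℝ) : EReal) ≤ klDiv p fM := by
  have hfar : (1 / 2) * hellinger fP fM ≤ hellinger p fM := by
    linarith [hellinger_triangle fP p fM, hellinger_comm fP p]
  have hfarSq := pow_le_pow_left₀ (mul_nonneg one_half_pos.le (hellinger_nonneg fP fM)) hfar 2
  rw [mul_pow, sq_hellinger, sq_hellinger] at hfarSq
  calc (((1 / 2) * hellingerSq fP fM : ℝ) : EReal)
      ≤ ((2 * hellingerSq p fM : ℝ) : EReal) := EReal.coe_le_coe_iff.2 (by linarith)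
    _ ≤ klDiv p fM := two_mul_hellingerSq_le_klDiv hp.1 hfM.1 (hp.2.trans hfM.2.symm)

/-- If `H(p‖f₊) ≤ H(f₊‖f₋)/2`, then `D(p‖f₋) ≥ H²(f₊‖f₋)/2`. -/
theorem klDiv_ge_of_hellinger_close {α : Type*} [Fintype α]
    (p fP fM : α → ℝ) (hp : IsPmf p) (hfP : IsPmf fP) (hfM : IsPmf fM)
    (hclose : hellinger p fP ≤ (1 / 2) * hellinger fP fM) :
    (((1 / 2) * hellingerSq fP fM : ℝ) : EReal) ≤ klDiv p fM :=
  klDiv_ge_of_hellinger_close_general p fP fM hp hfM hclose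
end
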